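/- The function H : Θ → ℂ defined by H(η, ξ) = −(√3/6)·( Arg(R·e^{iξ} − 1) − Arg(u − conj(u₀)) + 2·⌈(ξ − π)/(2π)⌉·π + π/6 ) − (1/2)·ln( |u − u₀|·|u − conj(u₀)| ) + i·η/2, where R = e^{−√3(η+ξ)} and u = g(η, ξ), is injective on Θ. -/

import Mathlib

/-!
Put `ζ = R − e^{−iξ}`. Then `R e^{iξ} − 1 = e^{iξ} ζ`, `Re ζ = R − cos ξ > 0` because `R > 1` on `Θ`,
and `u − conj u₀ = (√3 R / (R² − 1)) · i · conj ζ`. Writing `ψ = ξ − 2kπ ∈ (−π, π]` with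
`k = ⌈(ξ − π)/(2π)⌉`, one gets `Arg(R e^{iξ} − 1) = ψ + Arg ζ` and `Arg(u − conj u₀) = π/2 − Arg ζ`,
where `Arg ζ = arctan (sin ξ / (R − cos ξ))`. So the ceiling term exactly undoes the branch cut,
`Im H = η/2`, and `Re H` is the smooth function `reHfun η ξ`. Its `ξ`-derivative is negative:
after clearing denominators this is `3Rc(R² + 1) − √3 Rs(R² − 1) < R⁴ + 4R² + 1` for
`c = cos ξ`, `s = sin ξ`, a consequence of Cauchy–Schwarz. Hence `H(η, ·)` is injective for each `η`.
-/

/-- The point `u₀ = (1 + √3 i)/2`. -/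
noncomputable def u0 : ℂ := (1 + Real.sqrt 3 * Complex.I) / 2

/-- The map `g(η, ξ) = √3 i (R e^{iξ} − 1)/(1 − R²) + u₀` with `R = e^{−√3(η+ξ)}`. -/
noncomputable def gexp (η ξ : ℝ) : ℂ :=
  (Real.sqrt 3 : ℂ) * Complex.I *
      (((Real.exp (-(Real.sqrt 3) * (η + ξ)) : ℝ) : ℂ) * Complex.exp (Complex.I * (ξ : ℂ)) - 1)
    / (1 - ((Real.exp (-(Real.sqrt 3) * (η + ξ)) : ℝ) : ℂ) ^ 2) + u0

/-- The function `H(η, ξ)` from the paper. -/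
noncomputable def Hfun (p : ℝ × ℝ) : ℂ :=
  let η := p.1
  let ξ := p.2
  let R : ℝ := Real.exp (-(Real.sqrt 3) * (η + ξ))
  let u : ℂ := gexp η ξ
  ((-(Real.sqrt 3 / 6) *
      (Complex.arg ((R : ℂ) * Complex.exp (Complex.I * (ξ : ℂ)) - 1)
        - Complex.arg (u - (starRingEnd ℂ) u0)
        + 2 * (⌈(ξ - Real.pi) / (2 * Real.pi)⌉ : ℤ) * Real.pi + Real.pi / 6)
    - Real.log (‖u - u0‖ * ‖u - (starRingEnd ℂ) u0‖) / 2 : ℝ) : ℂ)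
    + Complex.I * (η : ℂ) / 2

/-- The trapezoid `Θ = {(η, ξ) : −π ≤ η ≤ 0, ξ < −η}`. -/
def Theta : Set (ℝ × ℝ) :=
  {p : ℝ × ℝ | -Real.pi ≤ p.1 ∧ p.1 ≤ 0 ∧ p.2 < -p.1}

open Real

noncomputable def radius (η ξ : ℝ) : ℝ := Real.exp (-√3 * (η + ξ))

lemma radius_def (η ξ : ℝ) : Real.exp (-√3 * (η + ξ)) = radius η ξ := rfl

lemma one_lt_radius {η ξ : ℝ} (h : ξ < -η) : 1 < radius η ξ :=
  Real.one_lt_exp_iff.mpr (mul_pos_of_neg_of_neg (by simp) (by linarith))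

lemma hasDerivAt_radius (η ξ : ℝ) : HasDerivAt (radius η) (-√3 * radius η ξ) ξ := by
  have h := (((hasDerivAt_id ξ).const_add η).const_mul (-√3)).exp
  simp only [id, mul_one] at h
  exact h.congr_deriv (mul_comm _ _)

section Zeta

variable {R ξ : ℝ}

noncomputable def zeta (R ξ : ℝ) : ℂ := R - Complex.exp (-(Complex.I * ξ))

lemma zeta_re (R ξ : ℝ) : (zeta R ξ).re = R - cos ξ := by
  simp [zeta, Complex.exp_re]

lemma zeta_im (R ξ : ℝ) : (zeta R ξ).im = sin ξ := by
  simp [zeta, Complex.exp_im]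

lemma zeta_re_pos (hR : 1 < R) : 0 < (zeta R ξ).re := by
  rw [zeta_re]; linarith [cos_le_one ξ]

lemma zeta_ne_zero (hR : 1 < R) : zeta R ξ ≠ 0 := fun h ↦ by
  simpa [h] using zeta_re_pos (ξ := ξ) hR

lemma normSq_zeta (R ξ : ℝ) : Complex.normSq (zeta R ξ) = R ^ 2 - 2 * R * cos ξ + 1 := by
  rw [Complex.normSq_apply, zeta_re, zeta_im]
  linear_combination sin_sq_add_cos_sq ξ

lemma sq_sub_two_mul_mul_cos_add_one_pos (hR : 1 < R) : 0 < R ^ 2 - 2 * R * cos ξ + 1 := by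
  rw [← normSq_zeta]; exact Complex.normSq_pos.mpr (zeta_ne_zero hR)

lemma arg_zeta (hR : 1 < R) : (zeta R ξ).arg = arctan (sin ξ / (R - cos ξ)) := by
  have hre := zeta_re_pos (ξ := ξ) hR
  obtain ⟨h₁, h₂⟩ := abs_lt.mp (Complex.abs_arg_lt_pi_div_two_iff.mpr (Or.inl hre))
  rw [← zeta_re, ← zeta_im, ← Complex.tan_arg, arctan_tan h₁ h₂]

lemma exp_mul_zeta (R ξ : ℝ) :
    Complex.exp (Complex.I * ξ) * zeta R ξ = R * Complex.exp (Complex.I * ξ) - 1 := by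
  rw [zeta, Complex.exp_neg, mul_sub, mul_inv_cancel₀ (Complex.exp_ne_zero _), mul_comm]

lemma conj_zeta (R ξ : ℝ) :
    (starRingEnd ℂ) (zeta R ξ) = R - Complex.exp (Complex.I * ξ) := by
  rw [zeta, map_sub, Complex.conj_ofReal, ← Complex.exp_conj, map_neg, map_mul, Complex.conj_I,
    Complex.conj_ofReal, neg_mul, neg_neg]

end Zeta

lemma toIocDiv_two_pi_eq_ceil (ξ : ℝ) :
    toIocDiv two_pi_pos (-π) ξ = ⌈(ξ - π) / (2 * π)⌉ := by
  rw [toIocDiv_eq_neg_floor, ← Int.ceil_neg, ← neg_div]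
  ring_nf

-- For `|ψ| > π/2` compare with `arctan (sin ψ / -cos ψ) = ±π - ψ`.
lemma add_arctan_sin_div_mem_Ioc {R ψ : ℝ} (hR : 1 < R) (hψ : ψ ∈ Set.Ioc (-π) π) :
    ψ + arctan (sin ψ / (R - cos ψ)) ∈ Set.Ioc (-π) π := by
  obtain ⟨hψ₁, hψ₂⟩ := hψ
  have hRc : 0 < R - cos ψ := by linarith [cos_le_one ψ]
  constructor
  · rcases le_or_gt (-(π / 2)) ψ with hψ | hψ
    · linarith [neg_pi_div_two_lt_arctan (sin ψ / (R - cos ψ))]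
    · have hsin : sin ψ < 0 := sin_neg_of_neg_of_neg_pi_lt (by linarith) hψ₁
      have hcos : cos ψ < 0 := by
        rw [← cos_neg]; exact cos_neg_of_pi_div_two_lt_of_lt (by linarith) (by linarith)
      have harctan : arctan (sin ψ / -cos ψ) = -π - ψ := by
        rw [← arctan_tan (x := -π - ψ) (by linarith) (by linarith), tan_eq_sin_div_cos,
          show -π - ψ = -(ψ + π) by ring, sin_neg, cos_neg, sin_add_pi, cos_add_pi, neg_neg]
      have : arctan (sin ψ / -cos ψ) < arctan (sin ψ / (R - cos ψ)) := by
        apply arctan_strictMono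
        rw [div_lt_div_iff₀ (by linarith) hRc]
        nlinarith
      linarith
  · rcases le_or_gt ψ (π / 2) with hψ | hψ
    · linarith [arctan_lt_pi_div_two (sin ψ / (R - cos ψ))]
    · have hsin : 0 ≤ sin ψ := sin_nonneg_of_nonneg_of_le_pi (by linarith) hψ₂
      have hcos : cos ψ < 0 := cos_neg_of_pi_div_two_lt_of_lt hψ (by linarith)
      have harctan : arctan (sin ψ / -cos ψ) = π - ψ := by
        rw [← arctan_tan (x := π - ψ) (by linarith) (by linarith), tan_eq_sin_div_cos,
          sin_pi_sub, cos_pi_sub]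
      have : arctan (sin ψ / (R - cos ψ)) ≤ arctan (sin ψ / -cos ψ) := by
        apply arctan_strictMono.monotone
        rw [div_le_div_iff₀ hRc (by linarith)]
        nlinarith
      linarith

lemma arg_mul_exp_sub_one_add_ceil {R : ℝ} (hR : 1 < R) (ξ : ℝ) :
    (R * Complex.exp (Complex.I * ξ) - 1).arg + 2 * ⌈(ξ - π) / (2 * π)⌉ * π
      = ξ + arctan (sin ξ / (R - cos ξ)) := by
  set k := ⌈(ξ - π) / (2 * π)⌉
  set ψ := toIocMod two_pi_pos (-π) ξ
  have hψ : ψ = ξ - k * (2 * π) := by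
    have h := toIocMod_sub_self_eq_mul two_pi_pos (-π) ξ
    rw [toIocDiv_two_pi_eq_ceil] at h
    linarith
  have hmem : ψ + arctan (sin ξ / (R - cos ξ)) ∈ Set.Ioc (-π) π := by
    have hψ_mem : ψ ∈ Set.Ioc (-π) π := by
      have h := toIocMod_mem_Ioc two_pi_pos (-π) ξ
      rwa [show -π + 2 * π = π by ring] at h
    have h := add_arctan_sin_div_mem_Ioc hR hψ_mem
    rwa [hψ, sin_sub_int_mul_two_pi, cos_sub_int_mul_two_pi, ← hψ] at h
  have harg_exp : (Complex.exp (Complex.I * ξ)).arg = ψ := by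
    rw [mul_comm, Complex.arg_exp_mul_I]
  rw [← exp_mul_zeta, Complex.arg_mul (Complex.exp_ne_zero _) (zeta_ne_zero hR)
    (by rwa [harg_exp, arg_zeta hR]), harg_exp, arg_zeta hR, hψ]
  ring

lemma Complex.arg_I_mul_conj {z : ℂ} (hz : 0 < z.re) :
    (I * (starRingEnd ℂ) z).arg = π / 2 - z.arg := by
  have hz₀ : z ≠ 0 := fun h ↦ by simp [h] at hz
  obtain ⟨h₁, h₂⟩ := abs_lt.mp (abs_arg_lt_pi_div_two_iff.mpr (Or.inl hz))
  have hconj : ((starRingEnd ℂ) z).arg = -z.arg := by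
    rw [arg_conj, if_neg (by linarith)]
  have hsum : I.arg + ((starRingEnd ℂ) z).arg = π / 2 - z.arg := by
    rw [arg_I, hconj, sub_eq_add_neg]
  rw [arg_mul I_ne_zero ((map_ne_zero _).mpr hz₀) (by rw [hsum]; constructor <;> linarith), hsum]

section Curve

variable {η ξ : ℝ}

lemma conj_u0 : (starRingEnd ℂ) u0 = u0 - √3 * Complex.I := by
  simp only [u0, map_div₀, map_add, map_one, map_mul, Complex.conj_ofReal, Complex.conj_I,
    map_ofNat]
  ring

lemma gexp_sub_u0 (η ξ : ℝ) :
    gexp η ξ - u0 = √3 * Complex.I * (Complex.exp (Complex.I * ξ) * zeta (radius η ξ) ξ)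
      / (1 - (radius η ξ : ℂ) ^ 2) := by
  rw [exp_mul_zeta, gexp, radius, add_sub_cancel_right]

lemma gexp_sub_conj_u0 (h : ξ < -η) :
    gexp η ξ - (starRingEnd ℂ) u0 = ((√3 * radius η ξ / (radius η ξ ^ 2 - 1) : ℝ) : ℂ)
      * (Complex.I * (starRingEnd ℂ) (zeta (radius η ξ) ξ)) := by
  have hR : (1 : ℂ) - (radius η ξ : ℂ) ^ 2 ≠ 0 := by
    norm_cast; nlinarith [one_lt_radius h]
  have hR' : (radius η ξ : ℂ) ^ 2 - 1 ≠ 0 := by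
    rw [← neg_sub]; exact neg_ne_zero.mpr hR
  rw [conj_u0, conj_zeta, gexp, ← radius]
  push_cast
  field_simp
  ring

lemma arg_gexp_sub_conj_u0 (h : ξ < -η) :
    (gexp η ξ - (starRingEnd ℂ) u0).arg
      = π / 2 - arctan (sin ξ / (radius η ξ - cos ξ)) := by
  have hR := one_lt_radius h
  have hcoef : 0 < √3 * radius η ξ / (radius η ξ ^ 2 - 1) := by
    have : 0 < radius η ξ ^ 2 - 1 := by nlinarith
    positivity
  rw [gexp_sub_conj_u0 h, Complex.arg_real_mul _ hcoef, Complex.arg_I_mul_conj (zeta_re_pos hR),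
    arg_zeta hR]

lemma norm_gexp_sub_u0_mul_norm_gexp_sub_conj_u0 (h : ξ < -η) :
    ‖gexp η ξ - u0‖ * ‖gexp η ξ - (starRingEnd ℂ) u0‖
      = 3 * radius η ξ * (radius η ξ ^ 2 - 2 * radius η ξ * cos ξ + 1)
        / (radius η ξ ^ 2 - 1) ^ 2 := by
  have hR := one_lt_radius h
  have hM : 0 < radius η ξ ^ 2 - 1 := by nlinarith
  have h1 : ‖(1 : ℂ) - (radius η ξ : ℂ) ^ 2‖ = radius η ξ ^ 2 - 1 := by
    rw [← norm_neg, neg_sub]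
    exact_mod_cast Real.norm_of_nonneg hM.le
  have h2 : ‖((√3 * radius η ξ / (radius η ξ ^ 2 - 1) : ℝ) : ℂ)‖
      = √3 * radius η ξ / (radius η ξ ^ 2 - 1) := by
    rw [Complex.norm_real, Real.norm_of_nonneg (by positivity)]
  rw [gexp_sub_u0, gexp_sub_conj_u0 h, ← normSq_zeta, ← Complex.normSq_conj,
    ← Complex.sq_norm]
  simp only [norm_mul, norm_div, h1, h2, Complex.norm_real,
    Real.norm_of_nonneg (Real.sqrt_nonneg 3), Complex.norm_I, Complex.norm_conj,
    Complex.norm_exp_I_mul_ofReal]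
  field_simp
  rw [Real.sq_sqrt zero_le_three]
  ring

noncomputable def reHfun (η ξ : ℝ) : ℝ :=
  -(√3 / 6) * (ξ + 2 * arctan (sin ξ / (radius η ξ - cos ξ)) - π / 3)
    - (log 3 - √3 * (η + ξ) + log (radius η ξ ^ 2 - 2 * radius η ξ * cos ξ + 1)
      - 2 * log (radius η ξ ^ 2 - 1)) / 2

lemma log_three_mul_radius_mul_div (h : ξ < -η) :
    log (3 * radius η ξ * (radius η ξ ^ 2 - 2 * radius η ξ * cos ξ + 1)
        / (radius η ξ ^ 2 - 1) ^ 2)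
      = log 3 - √3 * (η + ξ) + log (radius η ξ ^ 2 - 2 * radius η ξ * cos ξ + 1)
        - 2 * log (radius η ξ ^ 2 - 1) := by
  have hR := one_lt_radius h
  have hN := sq_sub_two_mul_mul_cos_add_one_pos (ξ := ξ) hR
  have hM : 0 < radius η ξ ^ 2 - 1 := by nlinarith
  rw [log_div (by positivity) (by positivity), log_mul (by positivity) hN.ne',
    log_mul three_ne_zero (by positivity), log_pow, radius, log_exp]
  push_cast
  ring

lemma Hfun_eq (h : ξ < -η) : Hfun (η, ξ) = reHfun η ξ + Complex.I * η / 2 := by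
  have hR := one_lt_radius h
  have harg := arg_mul_exp_sub_one_add_ceil hR ξ
  simp only [Hfun, radius_def]
  rw [arg_gexp_sub_conj_u0 h, norm_gexp_sub_u0_mul_norm_gexp_sub_conj_u0 h,
    log_three_mul_radius_mul_div h, reHfun]
  congr 2
  linear_combination (-(√3 / 6)) * harg

end Curve

noncomputable def reHfunDeriv (R c s : ℝ) : ℝ :=
  -(√3 / 6) * (1 + 2 * ((R * c - 1 + √3 * R * s) / (R ^ 2 - 2 * R * c + 1)))
    - (-√3 + 2 * R * (s - √3 * (R - c)) / (R ^ 2 - 2 * R * c + 1)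
      - 2 * (-2 * √3 * R ^ 2 / (R ^ 2 - 1))) / 2

-- By Cauchy–Schwarz the trigonometric part is at most `2√3 R √(R⁴ + R² + 1)` in absolute value,
-- and `(R⁴ + 4R² + 1)² − 12 R² (R⁴ + R² + 1) = (R² − 1)⁴`.
lemma quartic_pos_of_sq_add_sq_eq_one {R c s : ℝ} (hR : R ^ 2 ≠ 1) (hcs : s ^ 2 + c ^ 2 = 1) :
    0 < R ^ 4 + 4 * R ^ 2 + 1 - 3 * R * c * (R ^ 2 + 1) + √3 * R * s * (R ^ 2 - 1) := by
  have h3 : √3 ^ 2 = 3 := Real.sq_sqrt zero_le_three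
  set X := 3 * R * c * (R ^ 2 + 1) - √3 * R * s * (R ^ 2 - 1)
  have hX : X ^ 2 + (R * (3 * (R ^ 2 + 1) * s + √3 * (R ^ 2 - 1) * c)) ^ 2
      = 12 * R ^ 2 * (R ^ 4 + R ^ 2 + 1) := by
    linear_combination (R ^ 2 * (9 * (R ^ 2 + 1) ^ 2 + √3 ^ 2 * (R ^ 2 - 1) ^ 2)) * hcs
      + (R ^ 2 * (R ^ 2 - 1) ^ 2) * h3
  have hgap : 0 < (R ^ 2 - 1) ^ 4 := by
    have := sub_ne_zero.mpr hR
    positivity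
  have hlt : |X| < R ^ 4 + 4 * R ^ 2 + 1 := by
    refine abs_lt_of_sq_lt_sq ?_ (by positivity)
    nlinarith [sq_nonneg (R * (3 * (R ^ 2 + 1) * s + √3 * (R ^ 2 - 1) * c))]
  linarith [le_abs_self X]

lemma reHfunDeriv_neg {R c s : ℝ} (hR : 1 < R) (hcs : s ^ 2 + c ^ 2 = 1) :
    reHfunDeriv R c s < 0 := by
  have hc : c < R := by nlinarith [sq_nonneg s]
  have hN : 0 < R ^ 2 - 2 * R * c + 1 := by
    nlinarith [sq_nonneg s, mul_pos (sub_pos.2 hc) (sub_pos.2 hc)]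
  have hM : 0 < R ^ 2 - 1 := by nlinarith
  have h3 : √3 ^ 2 = 3 := Real.sq_sqrt zero_le_three
  have hreduce : √3 * reHfunDeriv R c s
      = 1 + (3 * R ^ 2 - 4 * R * c + 1 - 2 * √3 * R * s) / (R ^ 2 - 2 * R * c + 1)
        - 6 * R ^ 2 / (R ^ 2 - 1) := by
    rw [reHfunDeriv]
    linear_combination (-1 / 6 - (R * c - 1) / (R ^ 2 - 2 * R * c + 1) / 3
      - √3 * R * s / (R ^ 2 - 2 * R * c + 1) / 3 + 1 / 2 + R * (R - c) / (R ^ 2 - 2 * R * c + 1)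
      - 2 * R ^ 2 / (R ^ 2 - 1)) * h3
  have hclear : 1 + (3 * R ^ 2 - 4 * R * c + 1 - 2 * √3 * R * s) / (R ^ 2 - 2 * R * c + 1)
        - 6 * R ^ 2 / (R ^ 2 - 1)
      = -2 * (R ^ 4 + 4 * R ^ 2 + 1 - 3 * R * c * (R ^ 2 + 1) + √3 * R * s * (R ^ 2 - 1))
        / ((R ^ 2 - 2 * R * c + 1) * (R ^ 2 - 1)) := by
    rw [one_add_div hN.ne', div_sub_div _ _ hN.ne' hM.ne']
    ring
  refine neg_of_mul_neg_right ?_ (Real.sqrt_nonneg 3)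
  rw [hreduce, hclear]
  have hP := quartic_pos_of_sq_add_sq_eq_one (one_lt_pow₀ hR two_ne_zero).ne' hcs
  exact div_neg_of_neg_of_pos (by linarith) (mul_pos hN hM)

section Monotonicity

variable {η ξ : ℝ}

lemma hasDerivAt_arctan_sin_div (h : ξ < -η) :
    HasDerivAt (fun x ↦ arctan (sin x / (radius η x - cos x)))
      ((radius η ξ * cos ξ - 1 + √3 * radius η ξ * sin ξ)
        / (radius η ξ ^ 2 - 2 * radius η ξ * cos ξ + 1)) ξ := by
  have hR := one_lt_radius h
  have hRc : radius η ξ - cos ξ ≠ 0 := by linarith [cos_le_one ξ]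
  have hq := (hasDerivAt_sin ξ).div ((hasDerivAt_radius η ξ).sub (hasDerivAt_cos ξ)) hRc
  have h1q : 1 + (sin ξ / (radius η ξ - cos ξ)) ^ 2
      = (radius η ξ ^ 2 - 2 * radius η ξ * cos ξ + 1) / (radius η ξ - cos ξ) ^ 2 := by
    field_simp
    linear_combination sin_sq_add_cos_sq ξ
  refine hq.arctan.congr_deriv ?_
  simp only [Pi.sub_apply, Pi.div_apply]
  rw [h1q]
  field_simp
  congr 1
  linear_combination -sin_sq_add_cos_sq ξ

lemma hasDerivAt_log_sq_sub_two_mul_mul_cos_add_one (h : ξ < -η) :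
    HasDerivAt (fun x ↦ log (radius η x ^ 2 - 2 * radius η x * cos x + 1))
      (2 * radius η ξ * (sin ξ - √3 * (radius η ξ - cos ξ))
        / (radius η ξ ^ 2 - 2 * radius η ξ * cos ξ + 1)) ξ := by
  have hR := hasDerivAt_radius η ξ
  have hN : HasDerivAt (fun x ↦ radius η x ^ 2 - 2 * radius η x * cos x + 1)
      (2 * radius η ξ * (sin ξ - √3 * (radius η ξ - cos ξ))) ξ :=
    (((hR.pow 2).sub ((hR.const_mul 2).mul (hasDerivAt_cos ξ))).add_const 1).congr_deriv
      (by push_cast; ring)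
  exact hN.log (sq_sub_two_mul_mul_cos_add_one_pos (one_lt_radius h)).ne'

lemma hasDerivAt_log_sq_sub_one (h : ξ < -η) :
    HasDerivAt (fun x ↦ log (radius η x ^ 2 - 1))
      (-2 * √3 * radius η ξ ^ 2 / (radius η ξ ^ 2 - 1)) ξ := by
  have hR := one_lt_radius h
  have hM : HasDerivAt (fun x ↦ radius η x ^ 2 - 1) (-2 * √3 * radius η ξ ^ 2) ξ :=
    (((hasDerivAt_radius η ξ).pow 2).sub_const 1).congr_deriv (by push_cast; ring)
  exact hM.log (by nlinarith)

lemma hasDerivAt_reHfun (h : ξ < -η) :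
    HasDerivAt (reHfun η) (reHfunDeriv (radius η ξ) (cos ξ) (sin ξ)) ξ := by
  have hlin : HasDerivAt (fun x ↦ √3 * (η + x)) √3 ξ := by
    simpa using ((hasDerivAt_id ξ).const_add η).const_mul √3
  have := ((((hasDerivAt_id ξ).add ((hasDerivAt_arctan_sin_div h).const_mul 2)).sub_const
    (π / 3)).const_mul (-(√3 / 6))).sub
      (((((hasDerivAt_const ξ (log 3)).sub hlin).add
        (hasDerivAt_log_sq_sub_two_mul_mul_cos_add_one h)).sub
        ((hasDerivAt_log_sq_sub_one h).const_mul 2)).div_const 2)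
  exact this.congr_deriv (by rw [reHfunDeriv]; ring)

lemma reHfun_strictAntiOn (η : ℝ) : StrictAntiOn (reHfun η) (Set.Iio (-η)) := by
  refine strictAntiOn_of_deriv_neg (convex_Iio _) (fun ξ hξ ↦ ?_) (fun ξ hξ ↦ ?_)
  · exact (hasDerivAt_reHfun hξ).continuousAt.continuousWithinAt
  · rw [interior_Iio] at hξ
    rw [(hasDerivAt_reHfun hξ).deriv]
    exact reHfunDeriv_neg (one_lt_radius hξ) (sin_sq_add_cos_sq ξ)

end Monotonicity

/-- `H` is injective on `Θ`. -/
theorem Hfun_injOn : Set.InjOn Hfun Theta := by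
  rintro ⟨η₁, ξ₁⟩ ⟨-, -, hξ₁ : ξ₁ < -η₁⟩ ⟨η₂, ξ₂⟩ ⟨-, -, hξ₂ : ξ₂ < -η₂⟩ heq
  rw [Hfun_eq hξ₁, Hfun_eq hξ₂] at heq
  have hη : η₁ = η₂ := by simpa using congrArg Complex.im heq
  subst hη
  have hre : reHfun η₁ ξ₁ = reHfun η₁ ξ₂ := by simpa using congrArg Complex.re heq
  rw [(reHfun_strictAntiOn η₁).injOn hξ₁ hξ₂ hre]
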